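/- arXiv:1308.6260 — 7 statements merged into one kernel-verified Lean document; each statement's English description precedes it below -/
import Mathlib

section
/- Let m_i, m_h, k_F be positive real numbers and set q0 = min(k_F, (m_i/m_h)·k_F). Let p0 be a real number with 0 < p0 < q0, and let k be a real number with |k| ≤ k_F (the momentum of a fermion inside the Fermi sea). Suppose p', k' are real numbers satisfying momentum conservation p0 + k = p' + k' and energy conservation p0²/(2m_i) + k²/(2m_h) = p'²/(2m_i) + k'²/(2m_h), and suppose k' ≠ k (a nontrivial elastic collision outcome). Then |k'| < k_F; i.e., the final fermion momentum necessarily lies strictly inside the Fermi sea, so pairwise elastic scattering of the impurity on any fermion of the Fermi sea is Pauli-forbidden whenever 0 < p0 < q0. -/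
/-- Pauli blocking of pairwise elastic impurity–fermion scattering in 1D:
if the impurity momentum `p0` satisfies `0 < p0 < q0 = min (k_F, (m_i/m_h) k_F)`,
then for any fermion momentum `k` inside the Fermi sea (`|k| ≤ k_F`), any
nontrivial outcome `(p', k')` of an elastic collision (conserving momentum and
kinetic energy) has final fermion momentum strictly inside the Fermi sea. -/
theorem pauli_blocking_of_pairwise_scattering
    (m_i m_h kF p0 k p' k' : ℝ)
    (hmi : 0 < m_i) (hmh : 0 < m_h) (hkF : 0 < kF)
    (hp0_pos : 0 < p0) (hp0_lt : p0 < min kF (m_i / m_h * kF))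
    (hk : |k| ≤ kF)
    (hmom : p0 + k = p' + k')
    (hen : p0 ^ 2 / (2 * m_i) + k ^ 2 / (2 * m_h)
         = p' ^ 2 / (2 * m_i) + k' ^ 2 / (2 * m_h))
    (hne : k' ≠ k) :
    |k'| < kF := by
  rw [lt_min_iff] at hp0_lt
  obtain ⟨h1, h2⟩ := hp0_lt
  have h2' : m_h * p0 < m_i * kF := by
    have := (div_mul_eq_mul_div m_i m_h kF) ▸ h2
    rw [lt_div_iff₀ hmh] at this
    linarith
  rw [abs_le] at hk
  have hen' : m_h * p0 ^ 2 + m_i * k ^ 2 = m_h * p' ^ 2 + m_i * k' ^ 2 := by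
    field_simp at hen
    linarith
  have hp' : p' = p0 + k - k' := by linarith
  have hfac : (k' - k) * ((m_i + m_h) * k' - ((m_h - m_i) * k + 2 * m_h * p0)) = 0 := by
    subst hp'; ring_nf; nlinarith [hen']
  have hkey : (m_i + m_h) * k' = (m_h - m_i) * k + 2 * m_h * p0 := by
    rcases mul_eq_zero.mp hfac with h | h
    · exact absurd (by linarith : k' = k) hne
    · linarith
  rw [abs_lt]
  constructor <;> rcases le_or_gt m_i m_h with hc | hc <;> nlinarith [hk.1, hk.2]
end

section
/- Let N be an odd positive integer, let S be a finite set of integers with card S = N, and let M = Σ_{n∈S} n be the total momentum (in units of δk). Then Σ_{n∈S} n² ≥ N(N²−1)/12 + M·(N−1−M) (as rational/real numbers). Equivalently, in physical units with δk = 2π/L, k_F = δk(N−1)/2 and total momentum P = δk·M, the excitation energy E⁰_K = (δk²/(2m_h))·(Σ_{n∈S} n² − N(N²−1)/12) of the fermion configuration S above the Fermi sea satisfies E⁰_K ≥ P(2k_F − P)/(2m_h): the spectrum of the one-dimensional free-fermion gas has a lower edge given by this parabola. -/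
/-- Existence of a good particle-hole pair to remove in the induction. -/
lemma ff_aux_exists (m : ℤ) (k : ℕ) (P H : Finset ℤ)
    (hPc : P.card = k + 1) (hHc : H.card = k + 1)
    (hP : ∀ p ∈ P, p ≤ -(m+1) ∨ m+1 ≤ p)
    (hH : ∀ h ∈ H, -m ≤ h ∧ h ≤ m) :
    ∃ p ∈ P, ∃ h ∈ H,
      0 ≤ (p - h) * (h + ((∑ n ∈ P, n) - ∑ n ∈ H, n) - m) := by
  set M : ℤ := (∑ n ∈ P, n) - ∑ n ∈ H, n with hMdef
  have hPne : P.Nonempty := by rw [← Finset.card_pos, hPc]; omega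
  have hHne : H.Nonempty := by rw [← Finset.card_pos, hHc]; omega
  by_cases hB : ∃ h ∈ H, m - M ≤ h
  · obtain ⟨h, hhH, hh⟩ := hB
    by_cases hA : ∃ p ∈ P, m + 1 ≤ p
    · obtain ⟨p, hpP, hp⟩ := hA
      refine ⟨p, hpP, h, hhH, ?_⟩
      have h2 := (hH h hhH).2
      exact mul_nonneg (by linarith) (by linarith)
    · push_neg at hA
      have hleft : ∀ p ∈ P, p ≤ -(m+1) := by
        intro p hp
        rcases hP p hp with h1 | h1
        · exact h1
        · exact absurd h1 (by have := hA p hp; omega)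
      have hsumP : (∑ n ∈ P, n) ≤ ((k:ℤ)+1) * (-(m+1)) := by
        calc (∑ n ∈ P, n) ≤ ∑ _n ∈ P, (-(m+1)) := Finset.sum_le_sum hleft
        _ = ((k:ℤ)+1) * (-(m+1)) := by
            rw [Finset.sum_const, hPc, nsmul_eq_mul]; push_cast; ring
      have hsumH : -(((k:ℤ)+1) * m) ≤ ∑ n ∈ H, n := by
        calc -(((k:ℤ)+1) * m) = ∑ _n ∈ H, (-m) := by
              rw [Finset.sum_const, hHc, nsmul_eq_mul]; push_cast; ring
        _ ≤ ∑ n ∈ H, n := Finset.sum_le_sum (fun h hh => (hH h hh).1)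
      have hMneg : M ≤ -((k:ℤ)+1) := by
        have h9 : ((k:ℤ)+1) * (-(m+1)) + ((k:ℤ)+1) * m = -((k:ℤ)+1) := by ring
        linarith [hMdef.le, hMdef.ge]
      obtain ⟨p, hpP⟩ := hPne
      obtain ⟨h0, hh0⟩ := hHne
      refine ⟨p, hpP, h0, hh0, ?_⟩
      have h1 := hleft p hpP
      have h2 := (hH h0 hh0).1
      have h3 := (hH h0 hh0).2
      have hk : (0:ℤ) ≤ (k:ℤ) := Int.ofNat_nonneg k
      have := mul_nonneg (by linarith : (0:ℤ) ≤ h0 - p)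
        (by linarith : (0:ℤ) ≤ m - M - h0)
      nlinarith [this]
  · push_neg at hB
    by_cases hC : ∃ p ∈ P, p ≤ -(m+1)
    · obtain ⟨p, hpP, hp⟩ := hC
      obtain ⟨h0, hh0⟩ := hHne
      refine ⟨p, hpP, h0, hh0, ?_⟩
      have h1 := hB h0 hh0
      have h2 := (hH h0 hh0).1
      have := mul_nonneg (by linarith : (0:ℤ) ≤ h0 - p)
        (by linarith : (0:ℤ) ≤ m - M - h0)
      nlinarith [this]
    · exfalso
      push_neg at hC
      have hright : ∀ p ∈ P, m+1 ≤ p := by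
        intro p hp
        rcases hP p hp with h1 | h1
        · exact absurd h1 (by have := hC p hp; omega)
        · exact h1
      have hsumP : ((k:ℤ)+1) * (m+1) ≤ ∑ n ∈ P, n := by
        calc ((k:ℤ)+1) * (m+1) = ∑ _n ∈ P, (m+1) := by
              rw [Finset.sum_const, hPc, nsmul_eq_mul]; push_cast; ring
        _ ≤ ∑ n ∈ P, n := Finset.sum_le_sum hright
      have hsumH1 : ∑ n ∈ H, n ≤ ((k:ℤ)+1) * (m - M - 1) := by
        calc (∑ n ∈ H, n) ≤ ∑ _n ∈ H, (m - M - 1) :=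
              Finset.sum_le_sum (fun h hh => by have := hB h hh; omega)
        _ = ((k:ℤ)+1) * (m - M - 1) := by
            rw [Finset.sum_const, hHc, nsmul_eq_mul]; push_cast; ring
      have hsumH2 : ∑ n ∈ H, n ≤ ((k:ℤ)+1) * m := by
        calc (∑ n ∈ H, n) ≤ ∑ _n ∈ H, m :=
              Finset.sum_le_sum (fun h hh => (hH h hh).2)
        _ = ((k:ℤ)+1) * m := by
            rw [Finset.sum_const, hHc, nsmul_eq_mul]; push_cast; ring
      have hk : (0:ℤ) ≤ (k:ℤ) := Int.ofNat_nonneg k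
      have hM1 : ((k:ℤ)+1) ≤ M := by
        have h9 : ((k:ℤ)+1) * (m+1) - ((k:ℤ)+1) * m = (k:ℤ)+1 := by ring
        linarith [hMdef.le, hMdef.ge]
      have hM2 : ((k:ℤ)+1) * (M + 2) ≤ M := by
        have h9 : ((k:ℤ)+1) * (m+1) - ((k:ℤ)+1) * (m - M - 1) = ((k:ℤ)+1) * (M+2) := by ring
        linarith [hMdef.le, hMdef.ge]
      nlinarith [mul_nonneg hk (by linarith : (0:ℤ) ≤ M - ((k:ℤ)+1))]

/-- Particle-hole inequality: particles outside the Fermi sea `[-m, m]`,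
holes inside it, equal numbers of each. -/
lemma ff_claimA (m : ℤ) : ∀ (k : ℕ) (P H : Finset ℤ), P.card = k → H.card = k →
    (∀ p ∈ P, p ≤ -(m+1) ∨ m+1 ≤ p) → (∀ h ∈ H, -m ≤ h ∧ h ≤ m) →
    2*m*((∑ n ∈ P, n) - ∑ n ∈ H, n) - ((∑ n ∈ P, n) - ∑ n ∈ H, n)^2
      ≤ (∑ n ∈ P, n^2) - ∑ n ∈ H, n^2 := by
  intro k
  induction k with
  | zero =>
    intro P H hPc hHc _ _
    rw [Finset.card_eq_zero.mp hPc, Finset.card_eq_zero.mp hHc]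
    simp
  | succ k ih =>
    intro P H hPc hHc hP hH
    obtain ⟨p, hpP, h, hhH, hkey⟩ := ff_aux_exists m k P H hPc hHc hP hH
    have hPc' : (P.erase p).card = k := by
      rw [Finset.card_erase_of_mem hpP, hPc]; omega
    have hHc' : (H.erase h).card = k := by
      rw [Finset.card_erase_of_mem hhH, hHc]; omega

    have ihh := ih (P.erase p) (H.erase h) hPc' hHc'
      (fun q hq => hP q (Finset.mem_of_mem_erase hq))
      (fun q hq => hH q (Finset.mem_of_mem_erase hq))
    rw [Finset.sum_erase_eq_sub hpP, Finset.sum_erase_eq_sub hhH,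
      Finset.sum_erase_eq_sub hpP, Finset.sum_erase_eq_sub hhH] at ihh
    nlinarith [hkey, ihh]

lemma ff_Icc_succ (t : ℕ) :
    Finset.Icc (-((t:ℤ)+1)) ((t:ℤ)+1)
      = insert (-((t:ℤ)+1)) (insert ((t:ℤ)+1) (Finset.Icc (-(t:ℤ)) (t:ℤ))) := by
  ext x
  simp only [Finset.mem_Icc, Finset.mem_insert]
  omega

lemma ff_sum_Icc (t : ℕ) : ∑ n ∈ Finset.Icc (-(t:ℤ)) (t:ℤ), n = 0 := by
  induction t with
  | zero => simp
  | succ t ih =>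
    push_cast
    rw [ff_Icc_succ t, Finset.sum_insert (by simp [Finset.mem_Icc]; try omega),
      Finset.sum_insert (by simp [Finset.mem_Icc]; try omega), ih]
    ring

lemma ff_sum_sq_Icc (t : ℕ) :
    3 * ∑ n ∈ Finset.Icc (-(t:ℤ)) (t:ℤ), n^2 = (t:ℤ)*((t:ℤ)+1)*(2*(t:ℤ)+1) := by
  induction t with
  | zero => simp
  | succ t ih =>
    push_cast
    rw [ff_Icc_succ t, Finset.sum_insert (by simp [Finset.mem_Icc]; try omega),
      Finset.sum_insert (by simp [Finset.mem_Icc]; try omega)]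
    push_cast at ih ⊢
    ring_nf
    ring_nf at ih
    linarith

/-- Lower edge of the spectrum of the 1D free-fermion gas: for any set `S` of
`N` distinct integer momenta (in units of `δk`), with `N` odd and total momentum
`M = ∑ n ∈ S, n`, the sum of squares satisfies
`∑ n² ≥ N (N² − 1) / 12 + M (N − 1 − M)`.
Physically this is `E⁰_K ≥ P (2 k_F − P) / (2 m_h)` for the excitation energy
above the Fermi sea at total momentum `P`. -/
theorem free_fermion_lower_edge
    (N : ℕ) (hN : 0 < N) (hodd : Odd N)
    (S : Finset ℤ) (hcard : S.card = N)
    (M : ℤ) (hM : M = ∑ n ∈ S, n) :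
    ((N : ℚ) * ((N : ℚ) ^ 2 - 1) / 12 + (M : ℚ) * ((N : ℚ) - 1 - (M : ℚ)))
      ≤ ∑ n ∈ S, (n : ℚ) ^ 2 := by
  obtain ⟨t, ht⟩ := hodd
  set m : ℤ := (t : ℤ) with hm
  set F : Finset ℤ := Finset.Icc (-m) m with hF
  have hFcard : F.card = N := by
    rw [hF, Int.card_Icc]; omega
  set P : Finset ℤ := S \ F with hPdef
  set H : Finset ℤ := F \ S with hHdef
  have hcards : H.card = P.card :=
    (Finset.card_sdiff_comm (by rw [hcard, hFcard])).symm
  -- sum decompositions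
  have e1 : ∑ n ∈ S ∩ F, n + ∑ n ∈ P, n = ∑ n ∈ S, n :=
    Finset.sum_inter_add_sum_sdiff S F _
  have e2 : ∑ n ∈ S ∩ F, n + ∑ n ∈ H, n = ∑ n ∈ F, n := by
    rw [Finset.inter_comm]; exact Finset.sum_inter_add_sum_sdiff F S _
  have e3 : ∑ n ∈ S ∩ F, n^2 + ∑ n ∈ P, n^2 = ∑ n ∈ S, n^2 :=
    Finset.sum_inter_add_sum_sdiff S F _
  have e4 : ∑ n ∈ S ∩ F, n^2 + ∑ n ∈ H, n^2 = ∑ n ∈ F, n^2 := by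
    rw [Finset.inter_comm]; exact Finset.sum_inter_add_sum_sdiff F S _
  have hFsum : ∑ n ∈ F, n = 0 := ff_sum_Icc t
  have hFsq : 3 * ∑ n ∈ F, n^2 = m*(m+1)*(2*m+1) := ff_sum_sq_Icc t
  have hclaim := ff_claimA m P.card P H rfl hcards
    (by
      intro p hp
      rw [hPdef, Finset.mem_sdiff, hF, Finset.mem_Icc] at hp
      omega)
    (by
      intro h hh
      rw [hHdef, Finset.mem_sdiff, hF, Finset.mem_Icc] at hh
      exact hh.1)
  -- the integer inequality
  have hMint : (∑ n ∈ P, n) - ∑ n ∈ H, n = M := by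
    rw [hM]; omega
  rw [hMint] at hclaim
  have hZ : ∑ n ∈ F, n^2 + 2*m*M - M^2 ≤ ∑ n ∈ S, n^2 := by
    have : (∑ n ∈ P, n^2) - ∑ n ∈ H, n^2 = (∑ n ∈ S, n^2) - ∑ n ∈ F, n^2 := by
      omega
    linarith [hclaim, this.le, this.ge]
  -- cast to ℚ
  have hcast : ∑ n ∈ S, (n : ℚ)^2 = ((∑ n ∈ S, n^2 : ℤ) : ℚ) := by
    push_cast; rfl
  have hNQ : (N:ℚ) = 2*(t:ℚ)+1 := by rw [ht]; push_cast; ring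
  have hFsqQ : ((∑ n ∈ F, n^2 : ℤ) : ℚ) = (N:ℚ)*((N:ℚ)^2-1)/12 := by
    have h3 : (3:ℚ) * ((∑ n ∈ F, n^2 : ℤ) : ℚ) = (t:ℚ)*((t:ℚ)+1)*(2*(t:ℚ)+1) := by
      exact_mod_cast congrArg (fun x : ℤ => (x:ℚ)) hFsq
    rw [hNQ, eq_div_iff (by norm_num : (12:ℚ) ≠ 0)]
    linarith [h3]
  have hZQ : ((∑ n ∈ F, n^2 : ℤ) : ℚ) + 2*(t:ℚ)*(M:ℚ) - (M:ℚ)^2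
      ≤ ((∑ n ∈ S, n^2 : ℤ) : ℚ) := by exact_mod_cast hZ
  have hlin : (M:ℚ) * ((N:ℚ) - 1 - (M:ℚ)) = 2*(t:ℚ)*(M:ℚ) - (M:ℚ)^2 := by
    rw [hNQ]; ring
  rw [hcast, hlin, ← hFsqQ]
  linarith [hZQ]
end

section
/- (Lemma, abstract form.) Let m_i, m_h, k_F be positive real numbers and set q0 = min(k_F, (m_i/m_h)·k_F). Let p0 be a real number with 0 ≤ p0 < q0, let k be any real number, and let E be a real number satisfying both E ≥ 0 and E ≥ (p0 − k)·(2k_F − (p0 − k))/(2m_h). Then p0 − k ≤ (m_i/(q0 − p0))·(E + k²/(2m_i) − p0²/(2m_i)). -/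
/-- Lemma (abstract form): if `E ≥ 0` and `E ≥ (p0 − k)(2 k_F − (p0 − k))/(2 m_h)`
(the spectral lower edge at host momentum `p0 − k`), and `0 ≤ p0 < q0` with
`q0 = min (k_F, (m_i/m_h) k_F)`, then
`p0 − k ≤ (m_i/(q0 − p0)) (E + k²/(2 m_i) − p0²/(2 m_i))`. -/
theorem lemma_abstract_form
    (m_i m_h kF p0 k E : ℝ)
    (hmi : 0 < m_i) (hmh : 0 < m_h) (hkF : 0 < kF)
    (hp0_nonneg : 0 ≤ p0) (hp0_lt : p0 < min kF (m_i / m_h * kF))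
    (hE_nonneg : 0 ≤ E)
    (hE_edge : (p0 - k) * (2 * kF - (p0 - k)) / (2 * m_h) ≤ E) :
    p0 - k ≤ m_i / (min kF (m_i / m_h * kF) - p0)
             * (E + k ^ 2 / (2 * m_i) - p0 ^ 2 / (2 * m_i)) := by
  have hq0pos : 0 < min kF (m_i / m_h * kF) := lt_min hkF (by positivity)
  have hD : 0 < min kF (m_i / m_h * kF) - p0 := sub_pos.2 hp0_lt
  have hedge' : (p0 - k) * (2 * kF - (p0 - k)) ≤ E * (2 * m_h) :=
    (div_le_iff₀ (by positivity)).1 hE_edge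
  have hkey : (p0 - k) * (2 * min kF (m_i / m_h * kF) - (p0 - k)) ≤ 2 * m_i * E := by
    rcases le_or_gt (p0 - k) 0 with h | h
    · nlinarith [sq_nonneg (p0 - k), mul_nonpos_of_nonpos_of_nonneg h hq0pos.le,
        mul_nonneg (mul_pos hmi hmi).le hE_nonneg]
    · rcases min_cases kF (m_i / m_h * kF) with ⟨heq, hle⟩ | ⟨heq, hle⟩
      · rw [heq]
        have hmm : m_h ≤ m_i := by
          rw [div_mul_eq_mul_div, le_div_iff₀ hmh] at hle
          nlinarith
        nlinarith [mul_nonneg (sub_nonneg.2 hmm) hE_nonneg]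
      · rw [heq]
        set a := m_i / m_h with ha
        have ham : a * m_h = m_i := div_mul_cancel₀ _ (ne_of_gt hmh)
        have ha0 : 0 < a := by positivity
        have ha1 : a ≤ 1 := le_of_lt ((mul_lt_iff_lt_one_left hkF).1 hle)
        nlinarith [mul_le_mul_of_nonneg_left hedge' ha0.le, sq_nonneg (p0 - k),
          mul_pos h h]
  rw [div_mul_eq_mul_div, le_div_iff₀ hD]
  have hX : m_i * (E + k ^ 2 / (2 * m_i) - p0 ^ 2 / (2 * m_i))
      = m_i * E + k ^ 2 / 2 - p0 ^ 2 / 2 := by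
    field_simp
  rw [hX]
  nlinarith [hkey]
end

section
/- (Lemma, concrete form.) Let N be an odd integer with N ≥ 3, let L, m_i, m_h be positive reals, set δk = 2π/L, k_F = δk(N−1)/2, q0 = min(k_F, (m_i/m_h)·k_F), and C = (k_F²/(6m_h))·N(N+1)/(N−1). Let p0 be a real number with 0 ≤ p0 < q0. Let S be a finite set of integers with card S = N, define the host energy E⁰_K = (δk²/(2m_h))·Σ_{n∈S} n² − C, and let k be a real number such that δk·(Σ_{n∈S} n) + k = p0 (total momentum conservation). Then p0 − k ≤ (m_i/(q0 − p0))·(E⁰_K + k²/(2m_i) − p0²/(2m_i)). -/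
/-!
Write `M = ∑ n ∈ S, n` and `Q = ∑ n ∈ S, n²`. The Fermi sea `{-K, …, K}` (`N = 2K + 1`) has sum of
squares `N(N² - 1)/12`, which is what `C` subtracts, so `E⁰_K` is `δk²/(2 m_h)` times the excess
`Q - N(N² - 1)/12`. Two facts about `N` distinct integers bound this excess: it is nonnegative (the
sea minimizes `Q`), and it is at least `M(N - 1 - M)`. Since `p0 - k = δk M`, these bounds give
`(p0 - k) q0 ≤ m_i E⁰_K + (p0 - k)²/2` for either value of the minimum defining `q0`, and dividing
by `q0 - p0 > 0` gives the claim.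
-/

open Finset

section ClosedForms

variable {R : Type*} [CommRing R]

lemma two_mul_sum_range_add (d : R) (n : ℕ) :
    2 * ∑ i ∈ range n, (d + i) = n * (2 * d + n - 1) := by
  induction n with
  | zero => simp
  | succ n ih => rw [sum_range_succ]; push_cast; linear_combination ih

lemma six_mul_sum_range_add_sq (d : R) (n : ℕ) :
    6 * ∑ i ∈ range n, (d + i) ^ 2 =
      n * (6 * d ^ 2 + 6 * d * (n - 1) + (n - 1) * (2 * n - 1)) := by
  induction n with
  | zero => simp
  | succ n ih => rw [sum_range_succ]; push_cast; linear_combination ih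

lemma twelve_mul_sum_range_add_sq {d : R} {n : ℕ} (hd : 2 * d + n = 1) :
    12 * ∑ i ∈ range n, (d + i) ^ 2 = n * (n ^ 2 - 1) := by
  linear_combination 2 * six_mul_sum_range_add_sq d n + 3 * n * (2 * d + n - 1) * hd

end ClosedForms

lemma sum_range_add_eq_zero {d : ℤ} {n : ℕ} (hd : 2 * d + n = 1) :
    ∑ i ∈ range n, (d + i) = 0 := by
  have h := two_mul_sum_range_add d n
  rw [show 2 * d + n - 1 = 0 by omega, mul_zero] at h
  omega

lemma sum_range_succ_add {M : Type*} [AddCommMonoid M] (g : ℤ → M) (d : ℤ) (n : ℕ) :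
    ∑ i ∈ range (n + 1), g (d + i) = g d + ∑ i ∈ range n, g (d + 1 + i) := by
  rw [sum_range_succ', add_comm]
  simp only [Nat.cast_add, Nat.cast_one, Nat.cast_zero, add_zero]
  congr 1
  exact sum_congr rfl fun i _ => by ring_nf

lemma Int.sum_Ico_eq_sum_range {M : Type*} [AddCommMonoid M] (f : ℤ → M) (d : ℤ) (n : ℕ) :
    ∑ x ∈ Ico d (d + n), f x = ∑ i ∈ Finset.range n, f (d + i) := by
  rw [Int.Ico_eq_finset_map, add_sub_cancel_left, Int.toNat_natCast, sum_map]
  rfl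

namespace Finset

theorem sum_le_sum_of_card_eq {ι M : Type*} [DecidableEq ι] [AddCommMonoid M]
    [PartialOrder M] [IsOrderedAddMonoid M] {s t : Finset ι} {f : ι → M} (c : M)
    (hst : #s = #t) (hs : ∀ x ∈ s \ t, f x ≤ c) (ht : ∀ x ∈ t \ s, c ≤ f x) :
    ∑ x ∈ s, f x ≤ ∑ x ∈ t, f x := by
  rw [← sum_inter_add_sum_sdiff s t, ← sum_inter_add_sum_sdiff t s, inter_comm]
  refine add_le_add le_rfl ?_
  calc ∑ x ∈ s \ t, f x ≤ #(s \ t) • c := sum_le_card_nsmul _ _ _ hs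
    _ = #(t \ s) • c := by rw [card_sdiff_comm hst]
    _ ≤ ∑ x ∈ t \ s, f x := card_nsmul_le_sum _ _ _ ht

lemma sum_range_add_sq_le_sum_sq (S : Finset ℤ) {d : ℤ} (hd : 2 * d + #S = 1) :
    ∑ i ∈ range #S, (d + i) ^ 2 ≤ ∑ x ∈ S, x ^ 2 := by
  rw [← Int.sum_Ico_eq_sum_range (· ^ 2)]
  refine sum_le_sum_of_card_eq (d ^ 2) (by simp) (fun x hx => ?_) (fun x hx => ?_)
  · simp only [mem_sdiff, mem_Ico] at hx
    nlinarith
  · simp only [mem_sdiff, mem_Ico, not_and_or, not_le, not_lt] at hx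
    rcases hx.2 with h | h <;> nlinarith

lemma sum_sub_sum_range_le {S : Finset ℤ} {a : ℤ} (hS : ∀ x ∈ S, x ≤ a) (d : ℤ) :
    ∑ x ∈ S, x - ∑ i ∈ range #S, (d + i) ≤ #S * (a - (d + #S - 1)) := by
  have hsum : ∑ i ∈ range #S, (a - i) + ∑ i ∈ range #S, (d + i) = #S * (a + d) := by
    rw [← sum_add_distrib]; simp
  linarith [sum_le_sum_range hS, two_mul_sum_range_add d #S]

lemma mul_le_sum_sub_sum_range {S : Finset ℤ} {b : ℤ} (hS : ∀ x ∈ S, b ≤ x) (d : ℤ) :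
    #S * (b - d) ≤ ∑ x ∈ S, x - ∑ i ∈ range #S, (d + i) := by
  have hsum : ∑ i ∈ range #S, (b + i) - ∑ i ∈ range #S, (d + i) = #S * (b - d) := by
    rw [← sum_sub_distrib]; simp [mul_sub]
  linarith [sum_range_le_sum hS]

-- Induction on `S`: drop its largest element (and the top of the block) when the excess
-- `∑ S - ∑ block` is nonnegative, its smallest (and the bottom of the block) otherwise. The two
-- bounds above show that neither step increases the slack of the inequality.
theorem mul_le_sum_sq_sub_sum_range_sq (S : Finset ℤ) (d : ℤ) :
    (∑ x ∈ S, x - ∑ i ∈ range #S, (d + i)) *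
        (2 * (d + #S - 1) - (∑ x ∈ S, x - ∑ i ∈ range #S, (d + i))) ≤
      ∑ x ∈ S, x ^ 2 - ∑ i ∈ range #S, (d + i) ^ 2 := by
  induction S using Finset.strongInduction generalizing d with | H S ih
  rcases S.eq_empty_or_nonempty with rfl | hne
  · simp
  by_cases hT : 0 ≤ ∑ x ∈ S, x - ∑ i ∈ range #S, (d + i)
  · have ha := S.max'_mem hne
    have hTle := sum_sub_sum_range_le (a := S.max' hne) (fun x hx => S.le_max' x hx) d
    have IH := ih _ (erase_ssubset ha) d
    generalize S.max' hne = a at *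
    rw [← add_sum_erase S _ ha, ← card_erase_add_one ha] at hT hTle
    rw [← add_sum_erase S _ ha, ← add_sum_erase S (· ^ 2) ha, ← card_erase_add_one ha]
    simp only [sum_range_succ] at hT hTle ⊢
    generalize #(S.erase a) = n at *
    generalize ∑ x ∈ S.erase a, x = M at *
    generalize ∑ i ∈ range n, (d + i) = B at *
    push_cast at *
    have hv : 0 ≤ a - (d + n) := by nlinarith
    rcases hv.eq_or_lt with hv | hv
    · nlinarith
    · nlinarith [mul_nonneg hT (by omega : (0 : ℤ) ≤ a - (d + n) - 1)]
  · have hb := S.min'_mem hne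
    have hTge := mul_le_sum_sub_sum_range (b := S.min' hne) (fun x hx => S.min'_le x hx) d
    have IH := ih _ (erase_ssubset hb) (d + 1)
    generalize S.min' hne = b at *
    rw [← add_sum_erase S _ hb, ← card_erase_add_one hb, sum_range_succ_add (fun x => x)]
      at hT hTge
    rw [← add_sum_erase S _ hb, ← add_sum_erase S (· ^ 2) hb, ← card_erase_add_one hb,
      sum_range_succ_add (fun x => x), sum_range_succ_add (· ^ 2)]
    generalize #(S.erase b) = n at *
    generalize ∑ x ∈ S.erase b, x = M at *
    generalize ∑ i ∈ range n, (d + 1 + i) = B at *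
    push_cast at *
    have hw : b - d < 0 := by nlinarith
    nlinarith [mul_nonneg (by linarith : (0 : ℤ) ≤ d - b)
      (by linarith : (0 : ℤ) ≤ n - (b + M - (d + B)))]

theorem card_mul_sq_sub_one_le_twelve_mul_sum_sq (S : Finset ℤ) (hS : Odd #S) :
    (#S : ℤ) * (#S ^ 2 - 1) ≤ 12 * ∑ x ∈ S, x ^ 2 := by
  obtain ⟨K, hK⟩ := hS
  have hd : 2 * (-K : ℤ) + #S = 1 := by omega
  rw [← twelve_mul_sum_range_add_sq hd]
  linarith [sum_range_add_sq_le_sum_sq S hd]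

theorem card_mul_sq_sub_one_add_le_twelve_mul_sum_sq (S : Finset ℤ) (hS : Odd #S) :
    (#S : ℤ) * (#S ^ 2 - 1) + 12 * ((∑ x ∈ S, x) * (#S - 1 - ∑ x ∈ S, x)) ≤
      12 * ∑ x ∈ S, x ^ 2 := by
  obtain ⟨K, hK⟩ := hS
  have hd : 2 * (-K : ℤ) + #S = 1 := by omega
  have h := mul_le_sum_sq_sub_sum_range_sq S (-K)
  rw [sum_range_add_eq_zero hd, sub_zero, show 2 * (-K + #S - 1 : ℤ) = #S - 1 by omega] at h
  linear_combination 12 * h - twelve_mul_sum_range_add_sq hd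

end Finset

lemma mul_min_le_of_sq_sub_le {P kF e m_i m_h : ℝ} (hkF : 0 ≤ kF) (hmi : 0 < m_i)
    (hmh : 0 < m_h) (he : 0 ≤ e) (hPe : 2 * kF * P - P ^ 2 ≤ e) :
    P * min kF (m_i / m_h * kF) ≤ m_i / (2 * m_h) * e + P ^ 2 / 2 := by
  have hcoef : m_i / (2 * m_h) = m_i / m_h / 2 := by ring
  rcases le_total m_i m_h with h | h
  · have hr : m_i / m_h ≤ 1 := (div_le_one hmh).2 h
    rw [min_eq_right (mul_le_of_le_one_left hkF hr)]
    nlinarith [mul_nonneg (div_nonneg hmi.le hmh.le) (sub_nonneg.2 hPe),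
      mul_nonneg (sub_nonneg.2 hr) (sq_nonneg P)]
  · have hr : 1 ≤ m_i / m_h := (one_le_div hmh).2 h
    rw [min_eq_left (le_mul_of_one_le_left hkF hr)]
    nlinarith [mul_le_mul_of_nonneg_right hr he]

lemma sub_le_div_mul_of_mul_le {p0 q0 k m_i E : ℝ} (hmi : 0 < m_i) (hp0 : p0 < q0)
    (h : (p0 - k) * q0 ≤ m_i * E + (p0 - k) ^ 2 / 2) :
    p0 - k ≤ m_i / (q0 - p0) * (E + k ^ 2 / (2 * m_i) - p0 ^ 2 / (2 * m_i)) := by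
  rw [div_mul_eq_mul_div, le_div_iff₀ (sub_pos.2 hp0)]
  have hE : m_i * (E + k ^ 2 / (2 * m_i) - p0 ^ 2 / (2 * m_i)) =
      m_i * E + (k ^ 2 - p0 ^ 2) / 2 := by
    field_simp; ring
  rw [hE]
  linear_combination h

theorem lemma_concrete_form_general
    (N : ℤ) (hN : 3 ≤ N) (hodd : Odd N)
    (L m_i m_h : ℝ) (hL : 0 < L) (hmi : 0 < m_i) (hmh : 0 < m_h)
    (δk kF q0 C : ℝ)
    (hδk : δk = 2 * Real.pi / L)
    (hkF : kF = δk * (N - 1) / 2)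
    (hq0 : q0 = min kF (m_i / m_h * kF))
    (hC : C = kF ^ 2 / (6 * m_h) * (N * (N + 1) / (N - 1)))
    (p0 : ℝ) (hp0_lt : p0 < q0)
    (S : Finset ℤ) (hcard : (S.card : ℤ) = N)
    (E0K k : ℝ)
    (hE0K : E0K = δk ^ 2 / (2 * m_h) * (∑ n ∈ S, (n : ℝ) ^ 2) - C)
    (hmom : δk * (∑ n ∈ S, (n : ℝ)) + k = p0) :
    p0 - k ≤ m_i / (q0 - p0) * (E0K + k ^ 2 / (2 * m_i) - p0 ^ 2 / (2 * m_i)) := by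
  have hoddS : Odd #S := by rw [← hcard] at hodd; exact_mod_cast hodd
  have hsq := (Int.cast_le (R := ℝ)).2 (card_mul_sq_sub_one_le_twelve_mul_sum_sq S hoddS)
  have hsqM := (Int.cast_le (R := ℝ)).2 (card_mul_sq_sub_one_add_le_twelve_mul_sum_sq S hoddS)
  rw [hcard] at hsq hsqM
  push_cast at hsq hsqM
  have hδk0 : 0 < δk := by rw [hδk]; positivity
  have hN1 : (0 : ℝ) < N - 1 := by
    have : (3 : ℝ) ≤ N := by exact_mod_cast hN
    linarith
  have hkF0 : 0 ≤ kF := by rw [hkF]; exact div_nonneg (mul_pos hδk0 hN1).le zero_le_two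
  set e := δk ^ 2 * (∑ n ∈ S, (n : ℝ) ^ 2 - N * (N ^ 2 - 1) / 12) with he_def
  have hE : m_i * E0K = m_i / (2 * m_h) * e := by
    rw [hE0K, hC, hkF]; field_simp [hN1.ne']; ring
  have hPe : 2 * kF * (p0 - k) - (p0 - k) ^ 2 ≤ e := by
    rw [he_def, hkF, ← hmom]; nlinarith [mul_le_mul_of_nonneg_left hsqM (sq_nonneg δk)]
  have key := mul_min_le_of_sq_sub_le hkF0 hmi hmh (mul_nonneg (sq_nonneg δk) (by linarith)) hPe
  rw [← hq0, ← hE] at key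
  exact sub_le_div_mul_of_mul_le hmi hp0_lt key

/-- Lemma (concrete form): for `N` odd fermions on a ring of circumference `L`,
with `δk = 2π/L`, `k_F = δk (N−1)/2`, `q0 = min (k_F, (m_i/m_h) k_F)` and
`C = (k_F²/(6 m_h)) N(N+1)/(N−1)`, any noninteracting eigenstate `|K, k⟩`
(fermion configuration `S ⊂ ℤ`, `|S| = N`, impurity momentum `k`) with total
momentum `p0 ∈ [0, q0)` satisfies
`p0 − k ≤ (m_i/(q0 − p0)) (E⁰_K + k²/(2 m_i) − p0²/(2 m_i))`,
where `E⁰_K = (δk²/(2 m_h)) ∑_{n ∈ S} n² − C`. -/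
theorem lemma_concrete_form
    (N : ℤ) (hN : 3 ≤ N) (hodd : Odd N)
    (L m_i m_h : ℝ) (hL : 0 < L) (hmi : 0 < m_i) (hmh : 0 < m_h)
    (δk kF q0 C : ℝ)
    (hδk : δk = 2 * Real.pi / L)
    (hkF : kF = δk * (N - 1) / 2)
    (hq0 : q0 = min kF (m_i / m_h * kF))
    (hC : C = kF ^ 2 / (6 * m_h) * (N * (N + 1) / (N - 1)))
    (p0 : ℝ) (hp0_nonneg : 0 ≤ p0) (hp0_lt : p0 < q0)
    (S : Finset ℤ) (hcard : (S.card : ℤ) = N)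
    (E0K k : ℝ)
    (hE0K : E0K = δk ^ 2 / (2 * m_h) * (∑ n ∈ S, (n : ℝ) ^ 2) - C)
    (hmom : δk * (∑ n ∈ S, (n : ℝ)) + k = p0) :
    p0 - k ≤ m_i / (q0 - p0) * (E0K + k ^ 2 / (2 * m_i) - p0 ^ 2 / (2 * m_i)) :=
  lemma_concrete_form_general N hN hodd L m_i m_h hL hmi hmh δk kF q0 C hδk hkF hq0 hC p0 hp0_lt S
    hcard E0K k hE0K hmom
end

section
/- (Infinite-time average equals the diagonal ensemble for a nondegenerate Hamiltonian.) Let E be a finite-dimensional complex inner product space, let H : E → E be a self-adjoint linear map, let (Ψ_j) be an orthonormal basis of E and (E_j) real numbers with H Ψ_j = E_j Ψ_j for all j, and assume the E_j are pairwise distinct (nondegenerate spectrum). Then for every linear map A : E → E and every vector ψ ∈ E, the time average (1/T)·∫₀^T ⟨exp(−itH)ψ, A exp(−itH)ψ⟩ dt converges, as T → ∞, to Σ_j |⟨Ψ_j, ψ⟩|² · ⟨Ψ_j, A Ψ_j⟩. -/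
/-!
In the eigenbasis, `exp(−itH)ψ = ∑ⱼ e^{−itEⱼ} ⟨Ψⱼ, ψ⟩ Ψⱼ`, so the expectation value of `A` is the
trigonometric polynomial `∑ⱼₖ conj ⟨Ψⱼ, ψ⟩ ⟨Ψₖ, ψ⟩ ⟨Ψⱼ, A Ψₖ⟩ e^{i(Eⱼ − Eₖ)t}`. The time average of
`e^{iωt}` over `[0, T]` is `1` for `ω = 0` and `O(1 / (|ω| T))` otherwise, so only the terms of
frequency zero survive, and by nondegeneracy these are exactly the diagonal terms `j = k`.
-/

open scoped InnerProductSpace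
open Filter Topology Complex ComplexConjugate

lemma pow_apply_of_apply_eq_smul {𝕜 E : Type*} [RCLike 𝕜] [NormedAddCommGroup E]
    [NormedSpace 𝕜 E] {T : E →L[𝕜] E} {μ : 𝕜} {v : E} (hv : T v = μ • v) (n : ℕ) :
    (T ^ n) v = μ ^ n • v := by
  induction n with
  | zero => simp
  | succ n ih =>
    rw [pow_succ', ContinuousLinearMap.mul_def, ContinuousLinearMap.comp_apply, ih, map_smul, hv,
      smul_smul, pow_succ]

lemma exp_apply_of_apply_eq_smul {𝕜 E : Type*} [RCLike 𝕜] [NormedAddCommGroup E]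
    [NormedSpace 𝕜 E] [CompleteSpace E] {T : E →L[𝕜] E} {μ : 𝕜} {v : E} (hv : T v = μ • v) :
    NormedSpace.exp T v = NormedSpace.exp μ • v := by
  have hT := (NormedSpace.exp_series_hasSum_exp' (𝕂 := 𝕜) T).mapL
    (ContinuousLinearMap.apply 𝕜 E v)
  have hμ := (NormedSpace.exp_series_hasSum_exp' (𝕂 := 𝕜) μ).smul_const v
  refine hT.unique (hμ.congr_fun fun n => ?_)
  simp [pow_apply_of_apply_eq_smul hv, smul_smul]

lemma OrthonormalBasis.exp_apply_eq_sum {𝕜 E ι : Type*} [RCLike 𝕜] [NormedAddCommGroup E]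
    [InnerProductSpace 𝕜 E] [Fintype ι] (b : OrthonormalBasis ι 𝕜 E) {T : E →L[𝕜] E}
    {μ : ι → 𝕜} (hT : ∀ i, T (b i) = μ i • b i) (x : E) :
    NormedSpace.exp T x = ∑ i, (NormedSpace.exp (μ i) * ⟪b i, x⟫_𝕜) • b i := by
  have : FiniteDimensional 𝕜 E := Module.Finite.of_basis b.toBasis
  have : CompleteSpace E := FiniteDimensional.complete 𝕜 E
  conv_lhs => rw [← b.sum_repr' x]
  simp only [map_sum, map_smul, exp_apply_of_apply_eq_smul (hT _), smul_smul, mul_comm]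

lemma inner_sum_smul_map_sum_smul {𝕜 E ι F : Type*} [RCLike 𝕜] [NormedAddCommGroup E]
    [InnerProductSpace 𝕜 E] [Fintype ι] [FunLike F E E] [LinearMapClass F 𝕜 E E] (A : F)
    (a : ι → 𝕜) (v : ι → E) :
    ⟪∑ i, a i • v i, A (∑ i, a i • v i)⟫_𝕜
      = ∑ p : ι × ι, conj (a p.1) * a p.2 * ⟪v p.1, A (v p.2)⟫_𝕜 := by
  rw [Fintype.sum_prod_type, sum_inner]
  simp only [map_sum, map_smul, inner_sum, inner_smul_left, inner_smul_right]
  exact Finset.sum_congr rfl fun _ _ => Finset.sum_congr rfl fun _ _ => by ring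

noncomputable def timeAverage (f : ℝ → ℂ) (T : ℝ) : ℂ :=
  1 / (T : ℂ) * ∫ t in (0)..T, f t

lemma tendsto_timeAverage_cexp_of_ne_zero {ω : ℝ} (hω : ω ≠ 0) :
    Tendsto (timeAverage fun t => cexp (I * ω * t)) atTop (𝓝 0) := by
  have hIω : I * ω ≠ 0 := mul_ne_zero I_ne_zero (ofReal_ne_zero.2 hω)
  have hbound : ∀ T : ℝ, ‖∫ t in (0)..T, cexp (I * ω * t)‖ ≤ 2 / |ω| := by
    intro T
    rw [integral_exp_mul_complex hIω, norm_div]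
    gcongr
    · calc _ ≤ ‖cexp (I * ω * T)‖ + ‖cexp (I * ω * 0)‖ := norm_sub_le _ _
        _ = 2 := by
          rw [mul_assoc, ← ofReal_mul, norm_exp_I_mul_ofReal, mul_zero, exp_zero, norm_one]
          norm_num
    · simp
  refine squeeze_zero_norm' (a := fun T : ℝ => 2 / |ω| * T⁻¹) ?_ ?_
  · filter_upwards [eventually_gt_atTop 0] with T hT
    rw [timeAverage, norm_mul, one_div, norm_inv, norm_real, Real.norm_of_nonneg hT.le, mul_comm]
    gcongr
    exact hbound T
  · simpa using tendsto_inv_atTop_zero.const_mul (2 / |ω|)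

lemma tendsto_timeAverage_cexp (ω : ℝ) :
    Tendsto (timeAverage fun t => cexp (I * ω * t)) atTop (𝓝 (if ω = 0 then 1 else 0)) := by
  split_ifs with hω
  · refine tendsto_const_nhds.congr' ?_
    filter_upwards [eventually_ne_atTop 0] with T hT
    simp [timeAverage, hω, hT]
  · exact tendsto_timeAverage_cexp_of_ne_zero hω

lemma timeAverage_sum_const_mul_cexp {κ : Type*} [Fintype κ] (a : κ → ℂ) (ω : κ → ℝ) (T : ℝ) :
    timeAverage (fun t => ∑ i, a i * cexp (I * ω i * t)) T
      = ∑ i, a i * timeAverage (fun t => cexp (I * ω i * t)) T := by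
  rw [timeAverage, intervalIntegral.integral_finsetSum fun i _ =>
    (by fun_prop : Continuous _).intervalIntegrable _ _]
  simp only [intervalIntegral.integral_const_mul, Finset.mul_sum, timeAverage]
  exact Finset.sum_congr rfl fun _ _ => mul_left_comm _ _ _

lemma tendsto_timeAverage_sum_cexp {κ : Type*} [Fintype κ] (a : κ → ℂ) (ω : κ → ℝ) :
    Tendsto (timeAverage fun t => ∑ i, a i * cexp (I * ω i * t)) atTop
      (𝓝 (∑ i, if ω i = 0 then a i else 0)) := by
  simp_rw [funext (timeAverage_sum_const_mul_cexp a ω)]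
  refine tendsto_finsetSum _ fun i _ => ?_
  simpa [mul_ite] using (tendsto_timeAverage_cexp (ω i)).const_mul (a i)

theorem time_average_eq_diagonal_ensemble_general
    {E : Type*} [NormedAddCommGroup E] [InnerProductSpace ℂ E]
    {ι : Type*} [Fintype ι]
    (H A : E →L[ℂ] E)
    (Ψ : OrthonormalBasis ι ℂ E) (Ej : ι → ℝ)
    (heig : ∀ j, H (Ψ j) = (Ej j : ℂ) • Ψ j)
    (hnondeg : Function.Injective Ej)
    (ψ : E) :
    Filter.Tendsto
      (fun T : ℝ => (1 / (T : ℂ)) *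
        ∫ t in (0)..T,
          ⟪NormedSpace.exp ((-(Complex.I * t)) • H) ψ,
            A (NormedSpace.exp ((-(Complex.I * t)) • H) ψ)⟫_ℂ)
      Filter.atTop
      (nhds (∑ j, (‖⟪Ψ j, ψ⟫_ℂ‖ ^ 2 : ℂ) * ⟪Ψ j, A (Ψ j)⟫_ℂ)) := by
  set a : ι × ι → ℂ := fun p => conj ⟪Ψ p.1, ψ⟫_ℂ * ⟪Ψ p.2, ψ⟫_ℂ * ⟪Ψ p.1, A (Ψ p.2)⟫_ℂ
  have hexpand (t : ℝ) :
      ⟪NormedSpace.exp ((-(I * t)) • H) ψ, A (NormedSpace.exp ((-(I * t)) • H) ψ)⟫_ℂ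
        = ∑ p, a p * cexp (I * (Ej p.1 - Ej p.2 : ℝ) * t) := by
    rw [Ψ.exp_apply_eq_sum (fun j => by rw [smul_apply, heig, smul_smul]) ψ,
      inner_sum_smul_map_sum_smul]
    refine Finset.sum_congr rfl fun p _ => ?_
    rw [map_mul, ← exp_eq_exp_ℂ, ← exp_conj]
    simp only [map_neg, map_mul, conj_I, conj_ofReal]
    rw [show I * ((Ej p.1 - Ej p.2 : ℝ) : ℂ) * t = -(-I * t) * Ej p.1 + -(I * t) * Ej p.2 by
      push_cast; ring, exp_add]
    ring
  have hdiag : ∑ p : ι × ι, (if Ej p.1 - Ej p.2 = 0 then a p else 0)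
      = ∑ j, (‖⟪Ψ j, ψ⟫_ℂ‖ ^ 2 : ℂ) * ⟪Ψ j, A (Ψ j)⟫_ℂ := by
    rw [Fintype.sum_prod_type]
    refine Finset.sum_congr rfl fun j _ => ?_
    rw [Finset.sum_eq_single j (fun k _ hk => if_neg (sub_ne_zero.2 (hnondeg.ne (Ne.symm hk))))
      (by simp), if_pos (sub_self _)]
    exact congrArg (· * _) (conj_mul' _)
  simp_rw [hexpand, ← hdiag]
  exact tendsto_timeAverage_sum_cexp a _

/-- For a nondegenerate self-adjoint Hamiltonian `H` on a finite-dimensional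
complex inner product space, the infinite-time average of the expectation value
`⟨exp(−itH)ψ, A exp(−itH)ψ⟩` of any observable `A` equals the diagonal-ensemble
value `∑_j |⟨Ψ_j, ψ⟩|² ⟨Ψ_j, A Ψ_j⟩`. -/
theorem time_average_eq_diagonal_ensemble
    {E : Type*} [NormedAddCommGroup E] [InnerProductSpace ℂ E]
    [FiniteDimensional ℂ E]
    {ι : Type*} [Fintype ι]
    (H A : E →L[ℂ] E)
    (hH : ∀ x y : E, ⟪H x, y⟫_ℂ = ⟪x, H y⟫_ℂ)
    (Ψ : OrthonormalBasis ι ℂ E) (Ej : ι → ℝ)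
    (heig : ∀ j, H (Ψ j) = (Ej j : ℂ) • Ψ j)
    (hnondeg : Function.Injective Ej)
    (ψ : E) :
    Filter.Tendsto
      (fun T : ℝ => (1 / (T : ℂ)) *
        ∫ t in (0)..T,
          ⟪NormedSpace.exp ((-(Complex.I * t)) • H) ψ,
            A (NormedSpace.exp ((-(Complex.I * t)) • H) ψ)⟫_ℂ)
      Filter.atTop
      (nhds (∑ j, (‖⟪Ψ j, ψ⟫_ℂ‖ ^ 2 : ℂ) * ⟪Ψ j, A (Ψ j)⟫_ℂ)) :=
  time_average_eq_diagonal_ensemble_general H A Ψ Ej heig hnondeg ψ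
end

section
/- (Abstract lower bound for everywhere repulsive interactions.) Let E be a finite-dimensional complex inner product space. Let H⁰, V, P : E → E be self-adjoint linear maps with V positive semidefinite (⟨Φ, V Φ⟩ ≥ 0 for all Φ ∈ E), and set H = H⁰ + V. Suppose (e_α) is an orthonormal basis of E consisting of joint eigenvectors: H⁰ e_α = ε_α e_α and P e_α = p_α e_α with real ε_α, p_α. Let ψ be a unit vector with H⁰ ψ = ε₀ ψ and P ψ = p0 ψ for reals ε₀, p0. Let λ > 0 and assume that p0 − p_α ≤ λ·(ε_α − ε₀) for every α. Let (Ψ_j) be an orthonormal basis of E with H Ψ_j = E_j Ψ_j for reals E_j, and define p_∞ = Σ_j |⟨ψ, Ψ_j⟩|² ⟨Ψ_j, P Ψ_j⟩. Then p_∞ ≥ p0 − λ·⟨ψ, V ψ⟩. -/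
open scoped InnerProductSpace

lemma quad_form_eq {E : Type*} [NormedAddCommGroup E] [InnerProductSpace ℂ E]
    [FiniteDimensional ℂ E] {ι : Type*} [Fintype ι]
    (A : E →ₗ[ℂ] E) (hA : LinearMap.IsSymmetric A)
    (b : OrthonormalBasis ι ℂ E) (a : ι → ℝ)
    (hAb : ∀ i, A (b i) = (a i : ℂ) • b i) (x : E) :
    (⟪x, A x⟫_ℂ).re = ∑ i, a i * ‖⟪b i, x⟫_ℂ‖ ^ 2 := by
  have h1 : ⟪x, A x⟫_ℂ = ∑ i, ⟪x, b i⟫_ℂ * ⟪b i, A x⟫_ℂ :=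
    (b.sum_inner_mul_inner x (A x)).symm
  have h2 : ∀ i, ⟪x, b i⟫_ℂ * ⟪b i, A x⟫_ℂ
      = ((a i * ‖⟪b i, x⟫_ℂ‖ ^ 2 : ℝ) : ℂ) := by
    intro i
    have hs : ⟪b i, A x⟫_ℂ = (a i : ℂ) * ⟪b i, x⟫_ℂ := by
      rw [← hA (b i) x, hAb i, inner_smul_left]
      simp
    rw [hs, ← inner_conj_symm x (b i)]
    have : (starRingEnd ℂ) ⟪b i, x⟫_ℂ * ((a i : ℂ) * ⟪b i, x⟫_ℂ)
        = (a i : ℂ) * ((starRingEnd ℂ) ⟪b i, x⟫_ℂ * ⟪b i, x⟫_ℂ) := by ring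
    rw [this, Complex.conj_mul']
    push_cast
    ring
  have h3 : ⟪x, A x⟫_ℂ = ((∑ i, a i * ‖⟪b i, x⟫_ℂ‖ ^ 2 : ℝ) : ℂ) := by
    rw [h1, Complex.ofReal_sum]
    exact Finset.sum_congr rfl fun i _ => h2 i
  rw [h3, Complex.ofReal_re]

lemma parseval_one {E : Type*} [NormedAddCommGroup E] [InnerProductSpace ℂ E]
    [FiniteDimensional ℂ E] {ι : Type*} [Fintype ι]
    (b : OrthonormalBasis ι ℂ E) (x : E) (hx : ‖x‖ = 1) :
    ∑ i, ‖⟪b i, x⟫_ℂ‖ ^ 2 = 1 := by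
  have := quad_form_eq (LinearMap.id) (fun u v => by simp) b (fun _ => 1)
    (fun i => by simp) x
  simp only [LinearMap.id_apply, one_mul] at this
  have h0 : ⟪x, x⟫_ℂ = 1 := by
    rw [inner_self_eq_norm_sq_to_K, hx]; norm_num
  rw [← this, h0]; simp

/-- Abstract lower bound for everywhere repulsive interactions: under the
hypotheses of the main Theorem, and assuming additionally that the interaction
`V` is positive semidefinite (everywhere repulsive potential), the
diagonal-ensemble impurity momentum
`p_∞ = ∑_j |⟨ψ, Ψ_j⟩|² ⟨Ψ_j, P Ψ_j⟩` satisfies `p_∞ ≥ p0 − λ ⟨ψ, V ψ⟩`. -/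
theorem diagonal_ensemble_lower_bound_repulsive
    {E : Type*} [NormedAddCommGroup E] [InnerProductSpace ℂ E]
    [FiniteDimensional ℂ E]
    {ι ι' : Type*} [Fintype ι] [Fintype ι']
    (H0 V P H : E →ₗ[ℂ] E)
    (hH0 : LinearMap.IsSymmetric H0)
    (hV : LinearMap.IsSymmetric V)
    (hP : LinearMap.IsSymmetric P)
    (hVpos : ∀ Φ : E, 0 ≤ (⟪Φ, V Φ⟫_ℂ).re)
    (hH : H = H0 + V)
    (e : OrthonormalBasis ι ℂ E) (ε p : ι → ℝ)
    (he_H0 : ∀ α, H0 (e α) = (ε α : ℂ) • e α)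
    (he_P : ∀ α, P (e α) = (p α : ℂ) • e α)
    (ψ : E) (hψ : ‖ψ‖ = 1) (ε0 p0 : ℝ)
    (hψ_H0 : H0 ψ = (ε0 : ℂ) • ψ)
    (hψ_P : P ψ = (p0 : ℂ) • ψ)
    (lam : ℝ) (hlam : 0 < lam)
    (hbound : ∀ α, p0 - p α ≤ lam * (ε α - ε0))
    (Ψ : OrthonormalBasis ι' ℂ E) (Ej : ι' → ℝ)
    (hΨ : ∀ j, H (Ψ j) = (Ej j : ℂ) • Ψ j) :
    p0 - lam * (⟪ψ, V ψ⟫_ℂ).re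
      ≤ ∑ j, ‖⟪ψ, Ψ j⟫_ℂ‖ ^ 2 * (⟪Ψ j, P (Ψ j)⟫_ℂ).re := by
  have hHsym : LinearMap.IsSymmetric H := hH ▸ hH0.add hV
  -- weights over j
  set w : ι' → ℝ := fun j => ‖⟪ψ, Ψ j⟫_ℂ‖ ^ 2 with hw
  have hwnn : ∀ j, 0 ≤ w j := fun j => sq_nonneg _
  have hwsum : ∑ j, w j = 1 := by
    have := parseval_one Ψ ψ hψ
    rw [← this]
    exact Finset.sum_congr rfl fun j _ => by rw [hw]; rw [norm_inner_symm]
  -- per-j key inequality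
  have hkey : ∀ j, p0 - (⟪Ψ j, P (Ψ j)⟫_ℂ).re
      ≤ lam * ((⟪Ψ j, H0 (Ψ j)⟫_ℂ).re - ε0) := by
    intro j
    have hPj := quad_form_eq P hP e p he_P (Ψ j)
    have hHj := quad_form_eq H0 hH0 e ε he_H0 (Ψ j)
    have hpar := parseval_one e (Ψ j) (Ψ.orthonormal.1 j)
    rw [hPj, hHj]
    have e1 : p0 - ∑ α, p α * ‖⟪e α, Ψ j⟫_ℂ‖ ^ 2
        = ∑ α, (p0 - p α) * ‖⟪e α, Ψ j⟫_ℂ‖ ^ 2 := by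
      have : ∑ α, (p0 - p α) * ‖⟪e α, Ψ j⟫_ℂ‖ ^ 2
          = p0 * ∑ α, ‖⟪e α, Ψ j⟫_ℂ‖ ^ 2 - ∑ α, p α * ‖⟪e α, Ψ j⟫_ℂ‖ ^ 2 := by
        simp only [sub_mul]
        rw [Finset.sum_sub_distrib, ← Finset.mul_sum]
      rw [this, hpar]; ring
    rw [e1]
    have e2 : lam * ((∑ α, ε α * ‖⟪e α, Ψ j⟫_ℂ‖ ^ 2) - ε0)
        = ∑ α, lam * (ε α - ε0) * ‖⟪e α, Ψ j⟫_ℂ‖ ^ 2 := by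
      have : ∑ α, lam * (ε α - ε0) * ‖⟪e α, Ψ j⟫_ℂ‖ ^ 2
          = lam * ∑ α, ε α * ‖⟪e α, Ψ j⟫_ℂ‖ ^ 2
            - lam * ε0 * ∑ α, ‖⟪e α, Ψ j⟫_ℂ‖ ^ 2 := by
        rw [Finset.mul_sum, Finset.mul_sum, ← Finset.sum_sub_distrib]
        exact Finset.sum_congr rfl fun α _ => by ring
      rw [this, hpar]; ring
    rw [e2]
    exact Finset.sum_le_sum fun α _ =>
      mul_le_mul_of_nonneg_right (hbound α) (sq_nonneg _)
  -- H0 expectation ≤ Ej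
  have hH0le : ∀ j, (⟪Ψ j, H0 (Ψ j)⟫_ℂ).re ≤ Ej j := by
    intro j
    have hHval : (⟪Ψ j, H (Ψ j)⟫_ℂ).re = Ej j := by
      rw [hΨ j, inner_smul_right]
      have : ⟪Ψ j, Ψ j⟫_ℂ = 1 := by
        rw [inner_self_eq_norm_sq_to_K, Ψ.orthonormal.1 j]; norm_num
      rw [this, mul_one, Complex.ofReal_re]
    have hsplit : (⟪Ψ j, H (Ψ j)⟫_ℂ).re
        = (⟪Ψ j, H0 (Ψ j)⟫_ℂ).re + (⟪Ψ j, V (Ψ j)⟫_ℂ).re := by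
      rw [hH]; simp [inner_add_right]
    have := hVpos (Ψ j)
    linarith [hHval, hsplit]
  -- sum of w j * Ej = ⟨ψ, H ψ⟩.re = ε0 + ⟨ψ, V ψ⟩.re
  have hsumE : ∑ j, w j * Ej j = ε0 + (⟪ψ, V ψ⟫_ℂ).re := by
    have hq := quad_form_eq H hHsym Ψ Ej hΨ ψ
    have hleft : (⟪ψ, H ψ⟫_ℂ).re = ε0 + (⟪ψ, V ψ⟫_ℂ).re := by
      rw [hH]
      simp only [LinearMap.add_apply, inner_add_right, Complex.add_re]
      congr 1
      rw [hψ_H0, inner_smul_right]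
      have : ⟪ψ, ψ⟫_ℂ = 1 := by
        rw [inner_self_eq_norm_sq_to_K, hψ]; norm_num
      rw [this, mul_one, Complex.ofReal_re]
    rw [← hleft, hq]
    exact Finset.sum_congr rfl fun j _ => by
      rw [hw, norm_inner_symm]; ring
  -- combine
  have hstep : p0 - ∑ j, w j * (⟪Ψ j, P (Ψ j)⟫_ℂ).re
      ≤ lam * ((∑ j, w j * Ej j) - ε0) := by
    have h1 : p0 - ∑ j, w j * (⟪Ψ j, P (Ψ j)⟫_ℂ).re
        = ∑ j, w j * (p0 - (⟪Ψ j, P (Ψ j)⟫_ℂ).re) := by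
      have : ∑ j, w j * (p0 - (⟪Ψ j, P (Ψ j)⟫_ℂ).re)
          = (∑ j, w j) * p0 - ∑ j, w j * (⟪Ψ j, P (Ψ j)⟫_ℂ).re := by
        rw [Finset.sum_mul, ← Finset.sum_sub_distrib]
        exact Finset.sum_congr rfl fun j _ => by ring
      rw [this, hwsum]; ring
    have h2 : lam * ((∑ j, w j * Ej j) - ε0)
        = ∑ j, w j * (lam * (Ej j - ε0)) := by
      have : ∑ j, w j * (lam * (Ej j - ε0))
          = lam * ∑ j, w j * Ej j - lam * ε0 * ∑ j, w j := by
        rw [Finset.mul_sum, Finset.mul_sum, ← Finset.sum_sub_distrib]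
        exact Finset.sum_congr rfl fun j _ => by ring
      rw [this, hwsum]; ring
    rw [h1, h2]
    refine Finset.sum_le_sum fun j _ => mul_le_mul_of_nonneg_left ?_ (hwnn j)
    calc p0 - (⟪Ψ j, P (Ψ j)⟫_ℂ).re
        ≤ lam * ((⟪Ψ j, H0 (Ψ j)⟫_ℂ).re - ε0) := hkey j
      _ ≤ lam * (Ej j - ε0) := by
          apply mul_le_mul_of_nonneg_left _ hlam.le
          linarith [hH0le j]
  rw [hsumE] at hstep
  have : ∑ j, ‖⟪ψ, Ψ j⟫_ℂ‖ ^ 2 * (⟪Ψ j, P (Ψ j)⟫_ℂ).re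
      = ∑ j, w j * (⟪Ψ j, P (Ψ j)⟫_ℂ).re := rfl
  rw [this]
  linarith
end

section
/- (Abstract form of the upper bound on the infinite-time momentum.) Let E be a finite-dimensional complex inner product space, let m_i > 0 be real, and let A, V, P : E → E be self-adjoint linear maps with A and V positive semidefinite. Set H = A + (1/(2m_i))·P² + V. Let (Ψ_j) be an orthonormal basis of E with H Ψ_j = E_j Ψ_j for reals E_j, and let ψ be a unit vector with P ψ = p0 ψ and A ψ = 0 for a real p0. Define p_∞ = Σ_j |⟨ψ, Ψ_j⟩|² ⟨Ψ_j, P Ψ_j⟩. Then |p_∞| ≤ sqrt( p0² + 2 m_i ⟨ψ, V ψ⟩ ). -/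
open scoped InnerProductSpace

/-! Write `w j = ‖⟪ψ, Ψ j⟫‖²` and `p j = re ⟪Ψ j, P Ψ j⟫`. The `w j` are a probability vector,
and since `H` is diagonal in `Ψ` the energy of `ψ` is the `w`-average of the `E_j`; with `A ψ = 0`
and `P ψ = p0 ψ` it equals `p0² / (2 m_i) + ⟪ψ, V ψ⟫`. In each eigenstate positivity of `A` and `V`
and Cauchy–Schwarz give `p j² ≤ ‖P Ψ j‖² ≤ 2 m_i E_j`. Jensen for `x ↦ x²` then yields
`p_∞² ≤ ∑ w j p j² ≤ 2 m_i ∑ w j E_j = p0² + 2 m_i ⟪ψ, V ψ⟫`. -/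

theorem sq_sum_mul_le_sum_mul_sq {ι : Type*} (s : Finset ι) {w p : ι → ℝ}
    (hw₀ : ∀ i ∈ s, 0 ≤ w i) (hw₁ : ∑ i ∈ s, w i = 1) :
    (∑ i ∈ s, w i * p i) ^ 2 ≤ ∑ i ∈ s, w i * p i ^ 2 :=
  (even_two.convexOn_pow (𝕜 := ℝ)).map_sum_le hw₀ hw₁ fun _ _ => Set.mem_univ _

section RCLike

variable {𝕜 E ι : Type*} [RCLike 𝕜] [NormedAddCommGroup E] [InnerProductSpace 𝕜 E] [Fintype ι]

theorem OrthonormalBasis.re_inner_map_self_eq_sum (b : OrthonormalBasis ι 𝕜 E) {T : E →ₗ[𝕜] E}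
    {μ : ι → ℝ} (hT : ∀ j, T (b j) = (μ j : 𝕜) • b j) (x : E) :
    RCLike.re ⟪x, T x⟫_𝕜 = ∑ j, ‖⟪x, b j⟫_𝕜‖ ^ 2 * μ j := by
  have hTx : T x = ∑ j, (⟪b j, x⟫_𝕜 * μ j) • b j := by
    conv_lhs => rw [← b.sum_repr' x]
    simp [map_sum, hT, smul_smul]
  rw [hTx, inner_sum, map_sum]
  refine Finset.sum_congr rfl fun j _ => ?_
  rw [inner_smul_right, ← inner_conj_symm x (b j), mul_comm, ← mul_assoc, RCLike.conj_mul,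
    ← RCLike.ofReal_pow, ← RCLike.ofReal_mul, RCLike.ofReal_re, RCLike.norm_conj]

theorem LinearMap.IsSymmetric.re_inner_map_map_self {P : E →ₗ[𝕜] E} (hP : P.IsSymmetric)
    (x : E) : RCLike.re ⟪x, P (P x)⟫_𝕜 = ‖P x‖ ^ 2 := by
  rw [← hP, inner_self_eq_norm_sq]

end RCLike

section Hamiltonian

variable {E : Type*} [NormedAddCommGroup E] [InnerProductSpace ℂ E] {A V P : E →ₗ[ℂ] E}

theorem re_inner_hamiltonian_self (hP : P.IsSymmetric) (c : ℝ) (x : E) :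
    (⟪x, (A + (c : ℂ) • (P ∘ₗ P) + V) x⟫_ℂ).re
      = (⟪x, A x⟫_ℂ).re + c * ‖P x‖ ^ 2 + (⟪x, V x⟫_ℂ).re := by
  simp only [LinearMap.add_apply, LinearMap.smul_apply, LinearMap.comp_apply, inner_add_right,
    inner_smul_right, Complex.add_re, Complex.re_ofReal_mul]
  rw [← hP.re_inner_map_map_self x]
  rfl

theorem mul_sq_re_inner_map_self_le_of_eigenvector (hP : P.IsSymmetric)
    (hA : ∀ x, 0 ≤ (⟪x, A x⟫_ℂ).re) (hV : ∀ x, 0 ≤ (⟪x, V x⟫_ℂ).re) {c e : ℝ} (hc : 0 ≤ c)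
    {x : E} (hx : ‖x‖ = 1) (he : (A + (c : ℂ) • (P ∘ₗ P) + V) x = (e : ℂ) • x) :
    c * (⟪x, P x⟫_ℂ).re ^ 2 ≤ e := by
  have henergy : (⟪x, A x⟫_ℂ).re + c * ‖P x‖ ^ 2 + (⟪x, V x⟫_ℂ).re = e := by
    rw [← re_inner_hamiltonian_self hP, he, inner_smul_right, inner_self_eq_norm_sq_to_K, hx]
    simp
  have hCS : (⟪x, P x⟫_ℂ).re ^ 2 ≤ ‖P x‖ ^ 2 := by
    rw [← sq_abs]
    gcongr
    calc |(⟪x, P x⟫_ℂ).re| ≤ ‖⟪x, P x⟫_ℂ‖ := Complex.abs_re_le_norm _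
      _ ≤ ‖P x‖ := by simpa [hx] using norm_inner_le_norm x (P x)
  nlinarith [hA x, hV x]

end Hamiltonian

theorem diagonal_ensemble_upper_bound_general
    {E : Type*} [NormedAddCommGroup E] [InnerProductSpace ℂ E]
    {ι : Type*} [Fintype ι]
    (m_i : ℝ) (hmi : 0 < m_i)
    (A V P H : E →ₗ[ℂ] E)
    (hP : LinearMap.IsSymmetric P)
    (hApos : ∀ Φ : E, 0 ≤ (⟪Φ, A Φ⟫_ℂ).re)
    (hVpos : ∀ Φ : E, 0 ≤ (⟪Φ, V Φ⟫_ℂ).re)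
    (hH : H = A + ((1 / (2 * m_i) : ℝ) : ℂ) • (P ∘ₗ P) + V)
    (Ψ : OrthonormalBasis ι ℂ E) (Ej : ι → ℝ)
    (hΨ : ∀ j, H (Ψ j) = (Ej j : ℂ) • Ψ j)
    (ψ : E) (hψ : ‖ψ‖ = 1) (p0 : ℝ)
    (hψ_P : P ψ = (p0 : ℂ) • ψ)
    (hψ_A : A ψ = 0) :
    |∑ j, ‖⟪ψ, Ψ j⟫_ℂ‖ ^ 2 * (⟪Ψ j, P (Ψ j)⟫_ℂ).re|
      ≤ Real.sqrt (p0 ^ 2 + 2 * m_i * (⟪ψ, V ψ⟫_ℂ).re) := by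
  subst hH
  set c : ℝ := 1 / (2 * m_i) with hc
  have h2mc : 2 * m_i * c = 1 := by rw [hc]; field_simp
  set w : ι → ℝ := fun j => ‖⟪ψ, Ψ j⟫_ℂ‖ ^ 2
  set p : ι → ℝ := fun j => (⟪Ψ j, P (Ψ j)⟫_ℂ).re
  have hw_sum : ∑ j, w j = 1 := by simp [w, Ψ.sum_sq_norm_inner_left, hψ]
  have hlevel : ∀ j, c * p j ^ 2 ≤ Ej j := fun j =>
    mul_sq_re_inner_map_self_le_of_eigenvector hP hApos hVpos (by positivity)
      (Ψ.orthonormal.1 j) (hΨ j)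
  have henergy : ∑ j, w j * Ej j = c * p0 ^ 2 + (⟪ψ, V ψ⟫_ℂ).re := by
    rw [← Ψ.re_inner_map_self_eq_sum hΨ, RCLike.re_to_complex, re_inner_hamiltonian_self hP,
      hψ_A, hψ_P, norm_smul, hψ]
    simp
  refine Real.abs_le_sqrt ?_
  calc (∑ j, w j * p j) ^ 2 ≤ ∑ j, w j * p j ^ 2 :=
        sq_sum_mul_le_sum_mul_sq _ (fun j _ => by positivity) hw_sum
    _ = 2 * m_i * ∑ j, w j * (c * p j ^ 2) := by
        rw [Finset.mul_sum]
        congr 1 with j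
        linear_combination (-(w j * p j ^ 2)) * h2mc
    _ ≤ 2 * m_i * ∑ j, w j * Ej j := by gcongr with j; exact hlevel j
    _ = p0 ^ 2 + 2 * m_i * (⟪ψ, V ψ⟫_ℂ).re := by rw [henergy]; linear_combination p0 ^ 2 * h2mc

/-- Abstract form of the upper bound on the infinite-time momentum: if
`H = A + (1/(2 m_i)) P² + V` with `A` and `V` positive semidefinite
self-adjoint, and the unit initial state `ψ` satisfies `P ψ = p0 ψ` and
`A ψ = 0`, then the diagonal-ensemble impurity momentum
`p_∞ = ∑_j |⟨ψ, Ψ_j⟩|² ⟨Ψ_j, P Ψ_j⟩` satisfies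
`|p_∞| ≤ √(p0² + 2 m_i ⟨ψ, V ψ⟩)`. -/
theorem diagonal_ensemble_upper_bound
    {E : Type*} [NormedAddCommGroup E] [InnerProductSpace ℂ E]
    [FiniteDimensional ℂ E]
    {ι : Type*} [Fintype ι]
    (m_i : ℝ) (hmi : 0 < m_i)
    (A V P H : E →ₗ[ℂ] E)
    (hA : LinearMap.IsSymmetric A)
    (hV : LinearMap.IsSymmetric V)
    (hP : LinearMap.IsSymmetric P)
    (hApos : ∀ Φ : E, 0 ≤ (⟪Φ, A Φ⟫_ℂ).re)
    (hVpos : ∀ Φ : E, 0 ≤ (⟪Φ, V Φ⟫_ℂ).re)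
    (hH : H = A + ((1 / (2 * m_i) : ℝ) : ℂ) • (P ∘ₗ P) + V)
    (Ψ : OrthonormalBasis ι ℂ E) (Ej : ι → ℝ)
    (hΨ : ∀ j, H (Ψ j) = (Ej j : ℂ) • Ψ j)
    (ψ : E) (hψ : ‖ψ‖ = 1) (p0 : ℝ)
    (hψ_P : P ψ = (p0 : ℂ) • ψ)
    (hψ_A : A ψ = 0) :
    |∑ j, ‖⟪ψ, Ψ j⟫_ℂ‖ ^ 2 * (⟪Ψ j, P (Ψ j)⟫_ℂ).re|
      ≤ Real.sqrt (p0 ^ 2 + 2 * m_i * (⟪ψ, V ψ⟫_ℂ).re) :=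
  diagonal_ensemble_upper_bound_general m_i hmi A V P H hP hApos hVpos hH Ψ Ej hΨ ψ hψ p0 hψ_P hψ_A
end
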